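/- arXiv:1706.05614 — 3 statements merged into one kernel-verified Lean document; each statement's English description precedes it below -/
import Mathlib

section
/- Let H be a non-abelian subgroup of a finite group G. If p is the smallest prime dividing |Aut(G)| and q is the smallest prime dividing |H|, then Pr(H, Aut(G)) ≤ (q² + p − 1)/(pq²). In particular, if q ≥ p then Pr(H, Aut(G)) ≤ (p² + p − 1)/p³ ≤ 5/8. -/
/-!
Count the pairs `(x, α)` fibrewise over `x ∈ H`: the fibre is the stabiliser of `x` in `Aut(G)`,
which is everything when `x ∈ L(H, Aut(G))` and otherwise a proper subgroup, hence of index at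
least `p`. This gives `Pr(H, Aut(G)) ≤ (|H| + (p - 1)|L|) / (p|H|)`. An element fixed by all inner
automorphisms is central, so `L ≤ Z(H)`; as `H` is non-abelian, `H/Z(H)` is not cyclic, so
`|H : Z(H)|` is neither `1` nor prime and is therefore at least `q²`, whence `q²|L| ≤ |H|`.
-/

open scoped Classical

variable {G : Type*}

/-- The relative autocommutativity degree `Pr(H, Aut(G))`: the probability that a randomly
chosen automorphism of `G` fixes a randomly chosen element of the subgroup `H`. -/
noncomputable def autPr [Group G] (H : Subgroup G) : ℚ :=
  (Nat.card {p : H × MulAut G // p.2 (p.1 : G) = (p.1 : G)} : ℚ) /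
    ((Nat.card H : ℚ) * (Nat.card (MulAut G) : ℚ))

/-- `L(H, Aut(G))`, the subgroup of elements of `H` fixed by every automorphism of `G`. -/
def autFix [Group G] (H : Subgroup G) : Subgroup G where
  carrier := {x | x ∈ H ∧ ∀ α : MulAut G, α x = x}
  one_mem' := ⟨H.one_mem, fun α => map_one α⟩
  mul_mem' := fun ha hb => ⟨H.mul_mem ha.1 hb.1, fun α => by
    rw [map_mul, ha.2 α, hb.2 α]⟩
  inv_mem' := fun ha => ⟨H.inv_mem ha.1, fun α => by rw [map_inv, ha.2 α]⟩

instance autFix_normal [Group G] (H : Subgroup G) : ((autFix H).subgroupOf H).Normal := by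
  constructor
  intro n hn g
  rw [Subgroup.mem_subgroupOf] at hn ⊢
  obtain ⟨-, hfix⟩ := hn
  have hcen : ∀ c : G, c * (n : G) = (n : G) * c := by
    intro c
    have h := hfix (MulAut.conj c)
    simp only [MulAut.conj_apply] at h
    exact mul_inv_eq_iff_eq_mul.mp h
  have hconj : ∀ c : G, c * (n : G) * c⁻¹ = (n : G) := by
    intro c
    rw [hcen c, mul_inv_cancel_right]
  refine ⟨(g * n * g⁻¹).2, fun α => ?_⟩
  push_cast
  rw [map_mul, map_mul, map_inv, hfix α, hconj (α g), hconj (g : G)]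

/-- `X_H`: the set of elements of `H` whose centralizer in `Aut(G)` is trivial, i.e. the only
automorphism fixing them is the identity. -/
def autX [Group G] (H : Subgroup G) : Set H :=
  {x | ∀ α : MulAut G, α (x : G) = x → α = 1}

/-- `S(H, Aut(G))`: the set of autocommutators `[x, α] = x⁻¹ α(x)` with `x ∈ H`, `α ∈ Aut(G)`. -/
def autS [Group G] (H : Subgroup G) : Set G :=
  {g | ∃ x ∈ H, ∃ α : MulAut G, g = x⁻¹ * α x}

/-- Every autocommutator `x⁻¹ α(x)` with `x ∈ H` lies in `[H, Aut(G)] = ⟨S(H, Aut(G))⟩`. -/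
lemma autcomm_mem_closure [Group G] (H : Subgroup G) (x : H) (α : MulAut G) :
    (x : G)⁻¹ * α x ∈ Subgroup.closure (autS H) :=
  Subgroup.subset_closure ⟨x, x.2, α, rfl⟩

namespace Subgroup

variable {A : Type*} [Group A] [Finite A]

theorem le_index_of_ne_top {K : Subgroup A} (hK : K ≠ ⊤) {p : ℕ}
    (hp : ∀ r : ℕ, r.Prime → r ∣ Nat.card A → p ≤ r) : p ≤ K.index := by
  have hne : K.index ≠ 1 := (one_lt_index_of_ne_top hK).ne'
  exact (hp _ (Nat.minFac_prime hne) ((Nat.minFac_dvd _).trans K.index_dvd_card)).trans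
    (Nat.minFac_le (Nat.pos_of_ne_zero index_ne_zero_of_finite))

theorem mul_card_le_of_ne_top {K : Subgroup A} (hK : K ≠ ⊤) {p : ℕ}
    (hp : ∀ r : ℕ, r.Prime → r ∣ Nat.card A → p ≤ r) : p * Nat.card K ≤ Nat.card A := by
  rw [← K.card_mul_index, mul_comm]
  exact Nat.mul_le_mul_left _ (le_index_of_ne_top hK hp)

theorem sq_le_index_center (hA : ¬ IsMulCommutative A) {q : ℕ}
    (hq : ∀ r : ℕ, r.Prime → r ∣ Nat.card A → q ≤ r) : q ^ 2 ≤ (center A).index := by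
  set n := (center A).index
  have hn1 : n ≠ 1 := fun h => hA (center_eq_top_iff.mp (index_eq_one.mp h))
  have hnp : ¬ n.Prime := fun h => by
    have : Fact n.Prime := ⟨h⟩
    have : IsCyclic (A ⧸ center A) := isCyclic_of_prime_card (index_eq_card _).symm
    exact hA (isMulCommutative_of_isCyclic_quotient_center_self A)
  have hqn : q ≤ n.minFac :=
    hq _ (Nat.minFac_prime hn1) ((Nat.minFac_dvd n).trans (center A).index_dvd_card)
  calc q ^ 2 ≤ n.minFac ^ 2 := Nat.pow_le_pow_left hqn 2
    _ ≤ n := Nat.minFac_sq_le_self (Nat.pos_of_ne_zero index_ne_zero_of_finite) hnp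

end Subgroup

section Autocommutativity

variable [Group G] (H : Subgroup G)

theorem autFix_subgroupOf_le_center : (autFix H).subgroupOf H ≤ Subgroup.center H := by
  intro x hx
  rw [Subgroup.mem_subgroupOf] at hx
  rw [Subgroup.mem_center_iff]
  intro g
  have h := hx.2 (MulAut.conj (g : G))
  rw [MulAut.conj_apply, mul_inv_eq_iff_eq_mul] at h
  exact Subtype.ext h

theorem sq_mul_card_autFix_le [Finite G] (hna : ¬ IsMulCommutative H) {q : ℕ}
    (hq : ∀ r : ℕ, r.Prime → r ∣ Nat.card H → q ≤ r) :
    q ^ 2 * Nat.card ((autFix H).subgroupOf H) ≤ Nat.card H :=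
  calc q ^ 2 * Nat.card ((autFix H).subgroupOf H)
      ≤ (Subgroup.center H).index * Nat.card (Subgroup.center H) :=
        Nat.mul_le_mul (Subgroup.sq_le_index_center hna hq)
          (Subgroup.card_le_of_le (autFix_subgroupOf_le_center H))
    _ = Nat.card H := by rw [mul_comm, Subgroup.card_mul_index]

theorem stabilizer_eq_top_iff_mem_autFix {x : H} :
    MulAction.stabilizer (MulAut G) (x : G) = ⊤ ↔ x ∈ (autFix H).subgroupOf H :=
  (Subgroup.eq_top_iff' _).trans ⟨fun h => ⟨x.2, h⟩, fun h => h.2⟩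

theorem card_fixedPairs_eq_sum [Fintype G] :
    Nat.card {a : H × MulAut G // a.2 (a.1 : G) = (a.1 : G)} =
      ∑ x : H, Nat.card (MulAction.stabilizer (MulAut G) (x : G)) := by
  rw [Nat.card_congr (Equiv.subtypeProdEquivSigmaSubtype fun (x : H) (α : MulAut G) =>
    α (x : G) = (x : G)), Nat.card_sigma]
  rfl

theorem mul_card_fixedPairs_le [Fintype G] {p : ℕ}
    (hp : ∀ r : ℕ, r.Prime → r ∣ Nat.card (MulAut G) → p ≤ r) :
    p * Nat.card {a : H × MulAut G // a.2 (a.1 : G) = (a.1 : G)} ≤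
      (Nat.card H + (p - 1) * Nat.card ((autFix H).subgroupOf H)) * Nat.card (MulAut G) := by
  set L := (autFix H).subgroupOf H
  set N := Nat.card (MulAut G)
  have hx : ∀ x : H, p * Nat.card (MulAction.stabilizer (MulAut G) (x : G)) ≤
      N + if x ∈ L then (p - 1) * N else 0 := by
    intro x
    split_ifs with hxL
    · rw [(stabilizer_eq_top_iff_mem_autFix H).mpr hxL, Subgroup.card_top, ← one_add_mul]
      exact Nat.mul_le_mul_right _ (by omega)
    · exact Subgroup.mul_card_le_of_ne_top (mt (stabilizer_eq_top_iff_mem_autFix H).mp hxL) hp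
  calc p * _ = ∑ x : H, p * Nat.card (MulAction.stabilizer (MulAut G) (x : G)) := by
        rw [card_fixedPairs_eq_sum, Finset.mul_sum]
    _ ≤ ∑ x : H, (N + if x ∈ L then (p - 1) * N else 0) := Finset.sum_le_sum fun x _ => hx x
    _ = _ := by
        rw [Finset.sum_add_distrib, ← Finset.sum_filter, Finset.sum_const, Finset.sum_const,
          ← Fintype.card_subtype, Finset.card_univ, ← Nat.card_eq_fintype_card,
          ← Nat.card_eq_fintype_card, smul_eq_mul, smul_eq_mul]
        ring

theorem autPr_le [Fintype G] {p : ℕ} (hp : 0 < p)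
    (hpmin : ∀ r : ℕ, r.Prime → r ∣ Nat.card (MulAut G) → p ≤ r) :
    autPr H ≤ (Nat.card H + (p - 1) * Nat.card ((autFix H).subgroupOf H) : ℚ) /
      (p * Nat.card H) := by
  have key := mul_card_fixedPairs_le H hpmin
  rw [← Nat.cast_le (α := ℚ)] at key
  push_cast [Nat.cast_sub hp] at key
  have hH : (0 : ℚ) < Nat.card H := by exact_mod_cast Nat.card_pos
  have hN : (0 : ℚ) < Nat.card (MulAut G) := by exact_mod_cast Nat.card_pos
  rw [autPr, div_le_div_iff₀ (by positivity) (by positivity)]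
  nlinarith

end Autocommutativity

theorem sq_add_sub_one_div_le {p q : ℚ} (hp : 1 ≤ p) (hpq : p ≤ q) :
    (q ^ 2 + p - 1) / (p * q ^ 2) ≤ (p ^ 2 + p - 1) / p ^ 3 := by
  have hp0 : 0 < p := by linarith
  have hq0 : 0 < q := by linarith
  rw [div_le_div_iff₀ (by positivity) (by positivity)]
  nlinarith [mul_nonneg (mul_nonneg (by linarith : (0:ℚ) ≤ p) (by linarith : (0:ℚ) ≤ p - 1))
    (mul_nonneg (by linarith : (0:ℚ) ≤ q - p) (by linarith : (0:ℚ) ≤ q + p))]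

theorem sq_add_sub_one_div_cube_le {p : ℚ} (hp : 2 ≤ p) : (p ^ 2 + p - 1) / p ^ 3 ≤ 5 / 8 := by
  rw [div_le_div_iff₀ (by positivity) (by norm_num)]
  -- `5p³ - 8(p² + p - 1) = (p - 2)(5p² + 2p - 4)`
  nlinarith [mul_nonneg (by linarith : (0:ℚ) ≤ p - 2)
    (by nlinarith : (0:ℚ) ≤ 5 * p ^ 2 + 2 * p - 4)]

theorem stmt7_general [Group G] [Fintype G] (H : Subgroup G)
    (hna : ¬ IsMulCommutative H) (p q : ℕ)
    (hp : p.Prime)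
    (hpmin : ∀ r : ℕ, r.Prime → r ∣ Nat.card (MulAut G) → p ≤ r)
    (hq : q.Prime)
    (hqmin : ∀ r : ℕ, r.Prime → r ∣ Nat.card H → q ≤ r) :
    autPr H ≤ ((q : ℚ) ^ 2 + (p : ℚ) - 1) / ((p : ℚ) * (q : ℚ) ^ 2)
    ∧ (p ≤ q →
        autPr H ≤ ((p : ℚ) ^ 2 + (p : ℚ) - 1) / (p : ℚ) ^ 3
        ∧ ((p : ℚ) ^ 2 + (p : ℚ) - 1) / (p : ℚ) ^ 3 ≤ 5 / 8) := by
  have hp2 : (2 : ℚ) ≤ p := by exact_mod_cast hp.two_le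
  have hq2 : (2 : ℚ) ≤ q := by exact_mod_cast hq.two_le
  have hH : (0 : ℚ) < Nat.card H := by exact_mod_cast Nat.card_pos
  have hL : (q : ℚ) ^ 2 * Nat.card ((autFix H).subgroupOf H) ≤ Nat.card H := by
    exact_mod_cast sq_mul_card_autFix_le H hna hqmin
  have bound : autPr H ≤ ((q : ℚ) ^ 2 + p - 1) / (p * q ^ 2) := by
    refine (autPr_le H hp.pos hpmin).trans ?_
    rw [div_le_div_iff₀ (by positivity) (by positivity)]
    nlinarith [mul_le_mul_of_nonneg_left hL (by nlinarith : (0 : ℚ) ≤ p * (p - 1))]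
  refine ⟨bound, fun hpq => ⟨bound.trans (sq_add_sub_one_div_le (by linarith) ?_),
    sq_add_sub_one_div_cube_le hp2⟩⟩
  exact_mod_cast hpq

theorem stmt7 [Group G] [Fintype G] [DecidableEq G] (H : Subgroup G)
    (hna : ¬ IsMulCommutative H) (p q : ℕ)
    (hp : p.Prime) (hpdvd : p ∣ Nat.card (MulAut G))
    (hpmin : ∀ r : ℕ, r.Prime → r ∣ Nat.card (MulAut G) → p ≤ r)
    (hq : q.Prime) (hqdvd : q ∣ Nat.card H)
    (hqmin : ∀ r : ℕ, r.Prime → r ∣ Nat.card H → q ≤ r) :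
    autPr H ≤ ((q : ℚ) ^ 2 + (p : ℚ) - 1) / ((p : ℚ) * (q : ℚ) ^ 2)
    ∧ (p ≤ q →
        autPr H ≤ ((p : ℚ) ^ 2 + (p : ℚ) - 1) / (p : ℚ) ^ 3
        ∧ ((p : ℚ) ^ 2 + (p : ℚ) - 1) / (p : ℚ) ^ 3 ≤ 5 / 8) :=
  stmt7_general H hna p q hp hpmin hq hqmin
end

section
/- Let H be a subgroup of a finite group G, let p be the smallest prime dividing |Aut(G)| and q the smallest prime dividing |H|, and suppose that [Aut(G) : C_{Aut(G)}(x)] = p for every x ∈ H \ L(H, Aut(G)). If H / L(H, Aut(G)) is isomorphic to ℤ_q × ℤ_q, then Pr(H, Aut(G)) = (q² + p − 1)/(pq²). -/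
open scoped Classical

variable {G : Type*}

/-! Counting the fixed pairs fibrewise over `H`, `Pr(H, Aut(G))` is the mean over `x ∈ H` of
`1 / [Aut(G) : C_{Aut(G)}(x)]`. That index is `1` on `L = L(H, Aut(G))` and `p` off it, so
`Pr(H, Aut(G)) = (|H| + (p - 1)|L|) / (p|H|)`, and `|H| = q²|L|` gives the formula. -/

open MulAction

lemma card_fixedPairs_eq_sum_card_stabilizer {A X ι : Type*} [Group A] [MulAction A X]
    [Finite A] [Fintype ι] (f : ι → X) :
    Nat.card {p : ι × A // p.2 • f p.1 = f p.1} = ∑ i, Nat.card (stabilizer A (f i)) := by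
  rw [Nat.card_congr (Equiv.subtypeProdEquivSigmaSubtype fun i (a : A) => a • f i = f i),
    Nat.card_sigma]
  rfl

lemma autPr_eq_sum_inv_index [Group G] [Fintype G] (H : Subgroup G) :
    autPr H = (∑ x : H, ((stabilizer (MulAut G) (x : G)).index : ℚ)⁻¹) / Nat.card H := by
  have hstab (x : G) : (Nat.card (stabilizer (MulAut G) x) : ℚ) / Nat.card (MulAut G)
      = ((stabilizer (MulAut G) x).index : ℚ)⁻¹ := by
    rw [← (stabilizer (MulAut G) x).index_mul_card, Nat.cast_mul,
      div_mul_cancel_right₀ (Nat.cast_ne_zero.mpr Nat.card_pos.ne')]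
  have hcount : Nat.card {p : H × MulAut G // p.2 (p.1 : G) = p.1}
      = ∑ x : H, Nat.card (stabilizer (MulAut G) (x : G)) :=
    card_fixedPairs_eq_sum_card_stabilizer _
  unfold autPr
  rw [hcount, Nat.cast_sum, mul_comm, ← div_div, Finset.sum_div]
  simp_rw [hstab]

lemma index_stabilizer_eq_one_iff [Group G] {H : Subgroup G} (x : H) :
    (stabilizer (MulAut G) (x : G)).index = 1 ↔ (x : G) ∈ autFix H := by
  rw [Subgroup.index_eq_one, Subgroup.eq_top_iff']
  exact ⟨fun h => ⟨x.2, h⟩, fun h => h.2⟩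

lemma autPr_of_index_stabilizer_eq [Group G] [Fintype G] {H : Subgroup G} {p : ℕ} (hp : p ≠ 0)
    (hstab : ∀ x : G, x ∈ H → x ∉ autFix H → (stabilizer (MulAut G) x).index = p) :
    autPr H = ((Nat.card H : ℚ) + (p - 1) * Nat.card ((autFix H).subgroupOf H))
      / (p * Nat.card H) := by
  set L := (autFix H).subgroupOf H
  have hinv (x : H) : ((stabilizer (MulAut G) (x : G)).index : ℚ)⁻¹
      = (p : ℚ)⁻¹ + (1 - (p : ℚ)⁻¹) * if x ∈ L then 1 else 0 := by
    by_cases hx : (x : G) ∈ autFix H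
    · simp [L, Subgroup.mem_subgroupOf, hx, (index_stabilizer_eq_one_iff x).2 hx]
    · simp [L, Subgroup.mem_subgroupOf, hx, hstab x x.2 hx]
  have hcardL : (∑ x : H, if x ∈ L then (1 : ℚ) else 0) = Nat.card L := by
    rw [Finset.sum_boole, Nat.card_eq_fintype_card, Fintype.card_subtype]
  have hp' : (p : ℚ) ≠ 0 := Nat.cast_ne_zero.mpr hp
  rw [autPr_eq_sum_inv_index, Finset.sum_congr rfl fun x _ => hinv x, Finset.sum_add_distrib,
    ← Finset.mul_sum, hcardL, Finset.sum_const, Finset.card_univ, nsmul_eq_mul,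
    ← Nat.card_eq_fintype_card]
  field_simp

theorem stmt14_general [Group G] [Fintype G] (H : Subgroup G) (p q : ℕ)
    (hp : p.Prime)
    (hstab : ∀ x : G, x ∈ H → x ∉ autFix H →
      (MulAction.stabilizer (MulAut G) x).index = p)
    (hquot : Nonempty ((H ⧸ (autFix H).subgroupOf H)
      ≃* Multiplicative (ZMod q) × Multiplicative (ZMod q))) :
    autPr H = ((q : ℚ) ^ 2 + (p : ℚ) - 1) / ((p : ℚ) * (q : ℚ) ^ 2) := by
  set L := (autFix H).subgroupOf H
  obtain ⟨e⟩ := hquot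
  have hHL : Nat.card H = q ^ 2 * Nat.card L := by
    rw [L.card_eq_card_quotient_mul_card_subgroup, Nat.card_congr e.toEquiv, Nat.card_prod,
      Nat.card_congr Multiplicative.toAdd, Nat.card_zmod, sq]
  have hq : (q : ℚ) ≠ 0 := by
    have hH : Nat.card H ≠ 0 := Nat.card_pos.ne'
    rw [hHL] at hH
    exact_mod_cast (pow_ne_zero_iff two_ne_zero).mp (left_ne_zero_of_mul hH)
  have hp' : (p : ℚ) ≠ 0 := Nat.cast_ne_zero.mpr hp.ne_zero
  rw [autPr_of_index_stabilizer_eq hp.ne_zero hstab, hHL]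
  push_cast
  field_simp
  ring

theorem stmt14 [Group G] [Fintype G] [DecidableEq G] (H : Subgroup G) (p q : ℕ)
    (hp : p.Prime) (hpdvd : p ∣ Nat.card (MulAut G))
    (hpmin : ∀ r : ℕ, r.Prime → r ∣ Nat.card (MulAut G) → p ≤ r)
    (hq : q.Prime) (hqdvd : q ∣ Nat.card H)
    (hqmin : ∀ r : ℕ, r.Prime → r ∣ Nat.card H → q ≤ r)
    (hstab : ∀ x : G, x ∈ H → x ∉ autFix H →
      (MulAction.stabilizer (MulAut G) x).index = p)
    (hquot : Nonempty ((H ⧸ (autFix H).subgroupOf H)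
      ≃* Multiplicative (ZMod q) × Multiplicative (ZMod q))) :
    autPr H = ((q : ℚ) ^ 2 + (p : ℚ) - 1) / ((p : ℚ) * (q : ℚ) ^ 2) :=
  stmt14_general H p q hp hstab hquot
end

section
/- Let H be a subgroup of a finite group G. Then Pr(H, Aut(G)) ≥ (1/|[H, Aut(G)]|)·(1 + (|[H, Aut(G)]| − 1)/[H : L(H, Aut(G))]). -/
open scoped Classical

variable {G : Type*}

/-!
Counting the pairs `(x, α)` with `α x = x` fibrewise over `x ∈ H` gives `∑ₓ |Stab(x)|`. An element
of `L(H, Aut G)` has stabilizer all of `Aut G`. For any other `x ∈ H`, the map `y ↦ x⁻¹ y`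
embeds the orbit of `x` into `[H, Aut G]`, so by orbit–stabilizer
`|Stab(x)| ≥ |Aut G| / |[H, Aut G]|`. Summing, and using `|H| = [H : L] · |L|`, gives the bound.
-/

namespace MulAction

variable {A α ι : Type*} [Group A] [MulAction A α]

lemma card_fixedPairs_eq_sum_card_stabilizer [Fintype ι] [Finite A] (f : ι → α) :
    Nat.card {p : ι × A // p.2 • f p.1 = f p.1} = ∑ i, Nat.card (stabilizer A (f i)) := by
  have := Fintype.ofFinite A
  rw [Nat.card_congr (Equiv.subtypeProdEquivSigmaSubtype fun i (a : A) => a • f i = f i),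
    Nat.card_sigma]
  rfl

lemma card_div_le_card_stabilizer [Finite A] {x : α} {k : ℕ} (hk : Nat.card (orbit A x) ≤ k) :
    (Nat.card A : ℚ) / k ≤ Nat.card (stabilizer A x) := by
  rcases k.eq_zero_or_pos with rfl | hk_pos
  · simp
  rw [div_le_iff₀ (by exact_mod_cast hk_pos), ← (stabilizer A x).card_mul_index,
    index_stabilizer, ← Nat.card_coe_set_eq]
  exact_mod_cast Nat.mul_le_mul_left _ hk

end MulAction

section Autocommutators

variable [Group G] (H : Subgroup G)

open MulAction

lemma card_orbit_le_card_closure_autS [Finite G] (x : H) :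
    Nat.card (orbit (MulAut G) (x : G)) ≤ Nat.card (Subgroup.closure (autS H)) := by
  refine Nat.card_le_card_of_injective
    (fun y => ⟨(x : G)⁻¹ * y, ?_⟩)
    fun y z hyz => Subtype.ext (mul_left_cancel (congrArg Subtype.val hyz))
  obtain ⟨α, hα⟩ := y.2
  rw [← hα]
  exact autcomm_mem_closure H x α

lemma stabilizer_eq_top_of_mem_autFix {x : G} (hx : x ∈ autFix H) :
    stabilizer (MulAut G) x = ⊤ :=
  Subgroup.eq_top_iff' _ |>.mpr hx.2

end Autocommutators

section Counting

variable [Group G] [Fintype G] (H : Subgroup G)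

open MulAction

local notation "K" => (Nat.card (Subgroup.closure (autS H)) : ℚ)

lemma card_div_add_ite_le_card_stabilizer (x : H) :
    (Nat.card (MulAut G) : ℚ) / K +
        (if (x : G) ∈ autFix H then Nat.card (MulAut G) * (1 - 1 / K) else 0) ≤
      Nat.card (stabilizer (MulAut G) (x : G)) := by
  split_ifs with hx
  · rw [stabilizer_eq_top_of_mem_autFix H hx, Subgroup.card_top]
    apply le_of_eq
    ring
  · simpa using card_div_le_card_stabilizer (card_orbit_le_card_closure_autS H x)

lemma card_mul_card_div_add_le_sum_card_stabilizer :
    (Nat.card H * Nat.card (MulAut G) : ℚ) / K +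
        Nat.card ((autFix H).subgroupOf H) * Nat.card (MulAut G) * (1 - 1 / K) ≤
      ∑ x : H, (Nat.card (stabilizer (MulAut G) (x : G)) : ℚ) := by
  refine le_of_eq_of_le ?_
    (Finset.sum_le_sum fun x _ => card_div_add_ite_le_card_stabilizer H x)
  rw [Finset.sum_add_distrib, ← Finset.sum_filter, Finset.sum_const, Finset.sum_const,
    Finset.card_univ, nsmul_eq_mul, nsmul_eq_mul, ← Fintype.card_subtype,
    ← Nat.card_eq_fintype_card, ← Nat.card_eq_fintype_card]
  simp only [Subgroup.mem_subgroupOf]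
  ring

end Counting

theorem stmt18_general [Group G] [Fintype G] (H : Subgroup G) :
    autPr H ≥
      (1 / (Nat.card (Subgroup.closure (autS H)) : ℚ)) *
        (1 + ((Nat.card (Subgroup.closure (autS H)) : ℚ) - 1)
          / ((autFix H).relIndex H : ℚ)) := by
  have hcount : Nat.card {p : H × MulAut G // p.2 (p.1 : G) = p.1} =
      ∑ x : H, Nat.card (MulAction.stabilizer (MulAut G) (x : G)) :=
    MulAction.card_fixedPairs_eq_sum_card_stabilizer _
  have hindex :
      ((autFix H).relIndex H : ℚ) * Nat.card ((autFix H).subgroupOf H) = Nat.card H := by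
    exact_mod_cast Subgroup.index_mul_card _
  have hr : ((autFix H).relIndex H : ℚ) ≠ 0 :=
    Nat.cast_ne_zero.mpr Subgroup.index_ne_zero_of_finite
  have hK : (Nat.card (Subgroup.closure (autS H)) : ℚ) ≠ 0 :=
    Nat.cast_ne_zero.mpr Nat.card_pos.ne'
  have hcard : (0 : ℚ) < Nat.card H * Nat.card (MulAut G) := by
    exact_mod_cast Nat.mul_pos Nat.card_pos Nat.card_pos
  rw [autPr, hcount, Nat.cast_sum, ge_iff_le, le_div_iff₀ hcard]
  refine le_of_eq_of_le ?_ (card_mul_card_div_add_le_sum_card_stabilizer H)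
  rw [← hindex]
  field_simp

theorem stmt18 [Group G] [Fintype G] [DecidableEq G] (H : Subgroup G) :
    autPr H ≥
      (1 / (Nat.card (Subgroup.closure (autS H)) : ℚ)) *
        (1 + ((Nat.card (Subgroup.closure (autS H)) : ℚ) - 1)
          / ((autFix H).relIndex H : ℚ)) :=
  stmt18_general H
end
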